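/- arXiv:2006.02988 — 4 statements merged into one kernel-verified Lean document; each statement's English description precedes it below -/
import Mathlib

section
/- Let G be a simple connected graph, f a strong rainbow edge coloring of G, and U a set of edges of G that forms a clique in the auxiliary graph H(G). Then f assigns pairwise distinct colors to the edges in U. -/
open SimpleGraph

variable {V : Type*} {C : Type*}

/-- A walk is a shortest path: it is a path whose length equals the distance
between its endpoints. -/
def IsShortestPath (G : SimpleGraph V) {u v : V} (p : G.Walk u v) : Prop :=
  p.IsPath ∧ p.length = G.dist u v

/-- A walk is rainbow w.r.t. an edge coloring `f` if all of its edges receive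
pairwise distinct colors. -/
def IsRainbow {G : SimpleGraph V} (f : Sym2 V → C) {u v : V} (p : G.Walk u v) : Prop :=
  (p.edges.map f).Nodup

/-- An edge `e` separates the vertices `u` and `v` if `e` lies on every
shortest `(u,v)`-path. -/
def EdgeSeparates (G : SimpleGraph V) (e : Sym2 V) (u v : V) : Prop :=
  ∀ p : G.Walk u v, IsShortestPath G p → e ∈ p.edges

/-- A vertex `w` separates the vertices `u` and `v` if `w` is an internal
vertex of every shortest `(u,v)`-path. -/
def VertexSeparates (G : SimpleGraph V) (w u v : V) : Prop :=
  w ≠ u ∧ w ≠ v ∧ ∀ p : G.Walk u v, IsShortestPath G p → w ∈ p.support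

/-- The auxiliary graph `H(G)`: vertices are the edges of `G`, and two edges
are adjacent iff some pair of distinct vertices of `G` is separated by both. -/
def auxGraph (G : SimpleGraph V) : SimpleGraph G.edgeSet where
  Adj e₁ e₂ := e₁ ≠ e₂ ∧
    ∃ u v : V, u ≠ v ∧ EdgeSeparates G e₁.1 u v ∧ EdgeSeparates G e₂.1 u v
  symm := by
    constructor
    rintro e₁ e₂ ⟨hne, u, v, huv, h1, h2⟩
    exact ⟨hne.symm, u, v, huv, h2, h1⟩
  loopless := by constructor; rintro e ⟨hne, -⟩; exact hne rfl

/-- An edge coloring strongly rainbow connects `G` if every pair of distinct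
vertices is joined by a rainbow shortest path. -/
def StronglyRainbowConnects (G : SimpleGraph V) (f : Sym2 V → C) : Prop :=
  ∀ u v : V, u ≠ v → ∃ p : G.Walk u v, IsShortestPath G p ∧ IsRainbow f p

/-- An edge coloring rainbow connects `G` if every pair of distinct vertices
is joined by a rainbow path. -/
def RainbowConnects (G : SimpleGraph V) (f : Sym2 V → C) : Prop :=
  ∀ u v : V, u ≠ v → ∃ p : G.Walk u v, p.IsPath ∧ IsRainbow f p

/-- The strong rainbow connection number of `G`. -/
noncomputable def src (G : SimpleGraph V) : ℕ :=
  sInf {k : ℕ | ∃ f : Sym2 V → Fin k, StronglyRainbowConnects G f}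

/-- The rainbow connection number of `G`. -/
noncomputable def rc (G : SimpleGraph V) : ℕ :=
  sInf {k : ℕ | ∃ f : Sym2 V → Fin k, RainbowConnects G f}

theorem IsRainbow.eq_of_mem_edges {G : SimpleGraph V} {f : Sym2 V → C} {u v : V}
    {p : G.Walk u v} (hp : IsRainbow f p) {e₁ e₂ : Sym2 V} (h₁ : e₁ ∈ p.edges)
    (h₂ : e₂ ∈ p.edges) (hf : f e₁ = f e₂) : e₁ = e₂ :=
  List.inj_on_of_nodup_map hp h₁ h₂ hf

theorem StronglyRainbowConnects.apply_ne_of_edgeSeparates {G : SimpleGraph V}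
    {f : Sym2 V → C} (hf : StronglyRainbowConnects G f) {e₁ e₂ : Sym2 V} (hne : e₁ ≠ e₂)
    {u v : V} (huv : u ≠ v) (h₁ : EdgeSeparates G e₁ u v) (h₂ : EdgeSeparates G e₂ u v) :
    f e₁ ≠ f e₂ := by
  obtain ⟨p, hp, hrainbow⟩ := hf u v huv
  exact fun heq => hne (hrainbow.eq_of_mem_edges (h₁ p hp) (h₂ p hp) heq)

theorem stmt3_general {V C : Type*} (G : SimpleGraph V)
    (f : Sym2 V → C) (hf : StronglyRainbowConnects G f)
    (U : Set G.edgeSet) (hU : (auxGraph G).IsClique U) :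
    ∀ e₁ ∈ U, ∀ e₂ ∈ U, e₁ ≠ e₂ → f e₁.1 ≠ f e₂.1 := by
  intro e₁ h₁ e₂ h₂ hne
  obtain ⟨-, u, v, huv, hsep₁, hsep₂⟩ := hU h₁ h₂ hne
  exact hf.apply_ne_of_edgeSeparates (Subtype.coe_ne_coe.mpr hne) huv hsep₁ hsep₂

/-- If `f` is a strong rainbow coloring of `G` and `U` is a clique in the
auxiliary graph `H(G)`, then `f` assigns pairwise distinct colors to `U`. -/
theorem stmt3 {V C : Type*} (G : SimpleGraph V) (hG : G.Connected)
    (f : Sym2 V → C) (hf : StronglyRainbowConnects G f)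
    (U : Set G.edgeSet) (hU : (auxGraph G).IsClique U) :
    ∀ e₁ ∈ U, ∀ e₂ ∈ U, e₁ ≠ e₂ → f e₁.1 ≠ f e₂.1 :=
  stmt3_general G f hf U hU
end

section
/- For every natural number k, there exists a graph G' with ω(H(G')) − diam(G') = k; concretely, G' = K_{1,k+2} satisfies ω(H(G')) = k+2 and diam(G') = 2. -/
open SimpleGraph

variable {V : Type*} {C : Type*}

/-! In the star `K_{1,n}` every leaf is pendant, so every walk between two distinct leaves
uses the pendant edges of both; hence any two edges of the star separate their leaves and
`H(K_{1,n})` is the complete graph on the `n` edges. The centre is adjacent to every other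
vertex while two leaves are not adjacent, so the diameter of the star is `2`. -/

namespace SimpleGraph

variable {α β : Type*}

lemma cliqueNum_top [Finite V] : (⊤ : SimpleGraph V).cliqueNum = Nat.card V := by
  have := Fintype.ofFinite V
  obtain ⟨s, hs⟩ := (⊤ : SimpleGraph V).exists_isNClique_cliqueNum
  refine le_antisymm ?_ ?_
  · rw [← hs.card_eq, Nat.card_eq_fintype_card]
    exact Finset.card_le_univ s
  · rw [Nat.card_eq_fintype_card, ← Finset.card_univ]
    exact IsClique.card_le_cliqueNum (tc := by simp)

lemma diam_eq_two_of_forall_adj {G : SimpleGraph V} {u : V}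
    (hu : ∀ v, u ≠ v → G.Adj u v) (hG : G ≠ ⊤) : G.diam = 2 := by
  have : Nontrivial V := by
    by_contra h
    rw [not_nontrivial_iff_subsingleton] at h
    exact hG (Subsingleton.elim _ _)
  have hediam : G.ediam ≤ 2 :=
    calc G.ediam ≤ 2 * G.eccent u := G.ediam_le_two_mul_eccent u
      _ ≤ 2 * 1 := by gcongr; exact (G.eccent_le_one_iff u).mpr hu
      _ = 2 := mul_one 2
  have h0 : G.diam ≠ 0 := diam_ne_zero_of_ediam_ne_top (ne_top_of_le_ne_top (by simp) hediam)
  have h1 : G.diam ≠ 1 := fun h => hG (diam_eq_one.mp h)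
  have h2 : G.diam ≤ 2 := ENat.toNat_le_of_le_natCast hediam
  omega

lemma Walk.mk_mem_edges_of_forall_adj_eq {G : SimpleGraph V} {u x v : V}
    (hx : ∀ w, G.Adj u w → w = x) (huv : u ≠ v) (p : G.Walk u v) : s(u, x) ∈ p.edges := by
  cases p with
  | nil => exact absurd rfl huv
  | cons h _ => simp [hx _ h]

lemma nat_card_edgeSet_completeBipartiteGraph :
    Nat.card (completeBipartiteGraph α β).edgeSet = Nat.card α * Nat.card β := by
  rw [edgeSet_completeBipartiteGraph, Nat.card_range_of_injective, Nat.card_prod]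
  rintro ⟨a, b⟩ ⟨a', b'⟩ h
  simpa using h

lemma completeBipartiteGraph.eq_inl_default_of_adj_inr [Unique α] {j : β} {w : α ⊕ β}
    (h : (completeBipartiteGraph α β).Adj (.inr j) w) : w = .inl default := by
  cases w with
  | inl a => rw [Unique.eq_default a]
  | inr => simp at h

lemma completeBipartiteGraph_diam_of_unique [Unique α] [Nontrivial β] :
    (completeBipartiteGraph α β).diam = 2 := by
  refine diam_eq_two_of_forall_adj (u := .inl default) (fun v hv => ?_) fun htop => ?_
  · cases v with
    | inl a => exact absurd (by rw [Unique.eq_default a]) hv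
    | inr => simp
  · obtain ⟨i, j, hij⟩ := exists_pair_ne β
    have : (completeBipartiteGraph α β).Adj (.inr i) (.inr j) := by simp [htop, hij]
    simp at this

end SimpleGraph

open SimpleGraph

variable {α β : Type*} {G : SimpleGraph V}

lemma edgeSeparates_left_of_forall_adj_eq {u x v : V} (hx : ∀ w, G.Adj u w → w = x)
    (huv : u ≠ v) : EdgeSeparates G s(u, x) u v :=
  fun p _ => p.mk_mem_edges_of_forall_adj_eq hx huv

lemma edgeSeparates_right_of_forall_adj_eq {u v y : V} (hy : ∀ w, G.Adj v w → w = y)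
    (huv : u ≠ v) : EdgeSeparates G s(v, y) u v :=
  fun p _ => by simpa using p.reverse.mk_mem_edges_of_forall_adj_eq hy huv.symm

lemma auxGraph_completeBipartiteGraph_of_unique [Unique α] :
    auxGraph (completeBipartiteGraph α β) = ⊤ := by
  ext ⟨e₁, he₁⟩ ⟨e₂, he₂⟩
  refine ⟨fun h => h.1, fun hne => ⟨hne, ?_⟩⟩
  simp only [edgeSet_completeBipartiteGraph, Set.mem_range] at he₁ he₂
  obtain ⟨⟨a, i⟩, rfl⟩ := he₁
  obtain ⟨⟨b, j⟩, rfl⟩ := he₂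
  have hij : i ≠ j := by
    rintro rfl
    exact hne (by rw [Subsingleton.elim a b])
  have hleaf : ∀ k : β, ∀ w, (completeBipartiteGraph α β).Adj (.inr k) w → w = .inl default :=
    fun _ _ => completeBipartiteGraph.eq_inl_default_of_adj_inr
  refine ⟨.inr i, .inr j, by simpa using hij, ?_, ?_⟩
  · show EdgeSeparates _ s(Sum.inl a, Sum.inr i) _ _
    rw [Sym2.eq_swap, Unique.eq_default a]
    exact edgeSeparates_left_of_forall_adj_eq (hleaf i) (by simpa using hij)
  · show EdgeSeparates _ s(Sum.inl b, Sum.inr j) _ _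
    rw [Sym2.eq_swap, Unique.eq_default b]
    exact edgeSeparates_right_of_forall_adj_eq (hleaf j) (by simpa using hij)

lemma cliqueNum_auxGraph_completeBipartiteGraph_of_unique [Unique α] [Finite β] :
    (auxGraph (completeBipartiteGraph α β)).cliqueNum = Nat.card β := by
  rw [auxGraph_completeBipartiteGraph_of_unique, cliqueNum_top,
    nat_card_edgeSet_completeBipartiteGraph, Nat.card_unique, one_mul]

/-- For every `k` there is a graph with `ω(H(G')) − diam(G') = k`; concretely,
`G' = K_{1,k+2}` has `ω(H(G')) = k+2` and `diam(G') = 2`. -/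
theorem stmt7 (k : ℕ) :
    (auxGraph (completeBipartiteGraph (Fin 1) (Fin (k + 2)))).cliqueNum = k + 2 ∧
    (completeBipartiteGraph (Fin 1) (Fin (k + 2))).diam = 2 ∧
    ∃ (W : Type) (G' : SimpleGraph W),
      (auxGraph G').cliqueNum - G'.diam = k := by
  have hclique : (auxGraph (completeBipartiteGraph (Fin 1) (Fin (k + 2)))).cliqueNum = k + 2 := by
    rw [cliqueNum_auxGraph_completeBipartiteGraph_of_unique, Nat.card_fin]
  have hdiam := completeBipartiteGraph_diam_of_unique (α := Fin 1) (β := Fin (k + 2))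
  refine ⟨hclique, hdiam, _, completeBipartiteGraph (Fin 1) (Fin (k + 2)), ?_⟩
  rw [hclique, hdiam, Nat.add_sub_cancel]
end

section
/- For every natural number k there exists a graph G with src(G) − max(diam(G), ω(H(G))) ≥ k; concretely, G = K_{2,(k+2)^2} satisfies diam(G) = 2, ω(H(G)) = 1, and src(G) = k+2. -/
/-!
In `K_{α,β}` adjacent vertices are joined only by their edge, and two vertices on the same side
are at distance 2, with one shortest path through each vertex of the other side. So once both
sides have two vertices, no edge separates a non-adjacent pair and `H(K_{α,β})` has no edges.

For an edge colouring `f`, the profile of a right vertex `b` is `a ↦ f s(a, b)`. Two right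
vertices have a rainbow shortest path exactly when their profiles differ, and two left vertices
exactly when some profile takes different values at them. With `c` colours and `s` left vertices
there are only `c ^ s` profiles, and using each of them once gives `src(K_{s, c ^ s}) = c`
whenever `s ≤ c`.
-/

open SimpleGraph

variable {V : Type*} {C : Type*}

namespace SimpleGraph

variable {G : SimpleGraph V} {u v w w' : V}

lemma cliqueNum_bot [Nonempty V] : (⊥ : SimpleGraph V).cliqueNum = 1 := by
  have : {n | ∃ s, (⊥ : SimpleGraph V).IsNClique n s} = Set.Iic 1 := by
    ext n
    simp only [isNClique_bot_iff, Set.mem_ofPred_eq, Set.mem_Iic]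
    refine ⟨fun ⟨_, hn, _⟩ ↦ hn, fun hn ↦ ?_⟩
    obtain ⟨x⟩ := ‹Nonempty V›
    interval_cases n
    · exact ⟨∅, by simp⟩
    · exact ⟨{x}, by simp⟩
  rw [cliqueNum, this, csSup_Iic]

lemma isShortestPath_toWalk (h : G.Adj u v) : IsShortestPath G h.toWalk :=
  ⟨by simp [h.ne], by simp [dist_eq_one_iff_adj.mpr h]⟩

lemma isShortestPath_cons_cons (h₁ : G.Adj u w) (h₂ : G.Adj w v) (huv : G.dist u v = 2) :
    IsShortestPath G (.cons h₁ (.cons h₂ .nil)) := by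
  have : u ≠ v := by rintro rfl; simp at huv
  exact ⟨by simp [h₁.ne, h₂.ne, this], by simp [huv]⟩

lemma IsShortestPath.exists_eq_cons_cons {p : G.Walk u v} (hp : IsShortestPath G p)
    (huv : G.dist u v = 2) :
    ∃ w, ∃ (h₁ : G.Adj u w) (h₂ : G.Adj w v), p = .cons h₁ (.cons h₂ .nil) := by
  have hlen : p.length = 2 := by rw [hp.2, huv]
  match p, hlen with
  | .cons h₁ (.cons h₂ .nil), _ => exact ⟨_, h₁, h₂, rfl⟩

lemma disjoint_edges_cons_cons (h₁ : G.Adj u w) (h₂ : G.Adj w v) (h₁' : G.Adj u w')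
    (h₂' : G.Adj w' v) (hw : w ≠ w') :
    (Walk.cons h₁ (.cons h₂ .nil)).edges.Disjoint (Walk.cons h₁' (.cons h₂' .nil)).edges := by
  have := h₁.ne; have := h₂.ne; have := h₁'.ne; have := h₂'.ne
  simp only [Walk.edges_cons, Walk.edges_nil, List.disjoint_cons_left, List.disjoint_cons_right,
    List.mem_cons, List.not_mem_nil, List.disjoint_nil_left, Sym2.eq_iff]
  grind

lemma EdgeSeparates.eq_of_adj {e : Sym2 V} (he : EdgeSeparates G e u v) (h : G.Adj u v) :
    e = s(u, v) := by
  simpa using he _ (isShortestPath_toWalk h)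

lemma not_edgeSeparates_of_disjoint {e : Sym2 V} {p q : G.Walk u v} (hp : IsShortestPath G p)
    (hq : IsShortestPath G q) (hpq : p.edges.Disjoint q.edges) : ¬ EdgeSeparates G e u v :=
  fun he ↦ hpq (he p hp) (he q hq)

lemma exists_edge_disjoint_shortest_paths (huv : G.dist u v = 2) (hw : w ∈ G.commonNeighbors u v)
    (hw' : w' ∈ G.commonNeighbors u v) (hne : w ≠ w') : ∃ p q : G.Walk u v,
      IsShortestPath G p ∧ IsShortestPath G q ∧ p.edges.Disjoint q.edges := by
  rw [mem_commonNeighbors] at hw hw'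
  exact ⟨_, _, isShortestPath_cons_cons hw.1 hw.2.symm huv,
    isShortestPath_cons_cons hw'.1 hw'.2.symm huv, disjoint_edges_cons_cons _ _ _ _ hne⟩

lemma auxGraph_eq_bot
    (h : ∀ u v, u ≠ v → ¬ G.Adj u v → ∃ p q : G.Walk u v,
      IsShortestPath G p ∧ IsShortestPath G q ∧ p.edges.Disjoint q.edges) :
    auxGraph G = ⊥ := by
  ext e₁ e₂
  simp only [auxGraph, bot_adj, iff_false, not_and, not_exists]
  intro hne u v huv he₁ he₂
  by_cases hadj : G.Adj u v
  · exact hne (Subtype.ext ((he₁.eq_of_adj hadj).trans (he₂.eq_of_adj hadj).symm))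
  · obtain ⟨p, q, hp, hq, hpq⟩ := h u v huv hadj
    exact not_edgeSeparates_of_disjoint hp hq hpq he₁

variable {α β : Type*}

lemma edist_completeBipartiteGraph_inl_inl [Nonempty β] {a a' : α} (h : a ≠ a') :
    (completeBipartiteGraph α β).edist (.inl a) (.inl a') = 2 := by
  obtain ⟨b⟩ := ‹Nonempty β›
  exact edist_eq_two_iff.mpr ⟨by simpa, by simp, ⟨.inr b, by simp [mem_commonNeighbors]⟩⟩

lemma edist_completeBipartiteGraph_inr_inr [Nonempty α] {b b' : β} (h : b ≠ b') :
    (completeBipartiteGraph α β).edist (.inr b) (.inr b') = 2 := by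
  obtain ⟨a⟩ := ‹Nonempty α›
  exact edist_eq_two_iff.mpr ⟨by simpa, by simp, ⟨.inl a, by simp [mem_commonNeighbors]⟩⟩

lemma dist_completeBipartiteGraph_inl_inl [Nonempty β] {a a' : α} (h : a ≠ a') :
    (completeBipartiteGraph α β).dist (.inl a) (.inl a') = 2 := by
  simp [dist, edist_completeBipartiteGraph_inl_inl h]

lemma dist_completeBipartiteGraph_inr_inr [Nonempty α] {b b' : β} (h : b ≠ b') :
    (completeBipartiteGraph α β).dist (.inr b) (.inr b') = 2 := by
  simp [dist, edist_completeBipartiteGraph_inr_inr h]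

lemma ediam_completeBipartiteGraph [Nontrivial α] [Nonempty β] :
    (completeBipartiteGraph α β).ediam = 2 := by
  obtain ⟨a, a', ha⟩ := exists_pair_ne α
  refine le_antisymm (ediam_le_of_edist_le fun u v ↦ not_lt.mp fun (h : 2 < _) ↦ ?_)
    ((edist_completeBipartiteGraph_inl_inl (β := β) ha).symm.trans_le edist_le_ediam)
  obtain ⟨huv, hadj, hcommon⟩ := two_lt_edist_iff.mp h
  obtain ⟨b⟩ := ‹Nonempty β›
  rcases u with a₁ | b₁ <;> rcases v with a₂ | b₂
  · exact (Set.eq_empty_iff_forall_notMem.mp hcommon) (.inr b) (by simp [mem_commonNeighbors])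
  · simp at hadj
  · simp at hadj
  · exact (Set.eq_empty_iff_forall_notMem.mp hcommon) (.inl a) (by simp [mem_commonNeighbors])

lemma diam_completeBipartiteGraph [Nontrivial α] [Nonempty β] :
    (completeBipartiteGraph α β).diam = 2 := by
  simp [diam, ediam_completeBipartiteGraph]

lemma auxGraph_completeBipartiteGraph [Nontrivial α] [Nontrivial β] :
    auxGraph (completeBipartiteGraph α β) = ⊥ := by
  refine auxGraph_eq_bot fun u v huv hadj ↦ ?_
  obtain ⟨a, a', ha⟩ := exists_pair_ne α
  obtain ⟨b, b', hb⟩ := exists_pair_ne β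
  rcases u with a₁ | b₁ <;> rcases v with a₂ | b₂
  · exact exists_edge_disjoint_shortest_paths
      (dist_completeBipartiteGraph_inl_inl (by simpa using huv)) (w := .inr b) (w' := .inr b')
      (by simp [mem_commonNeighbors]) (by simp [mem_commonNeighbors]) (by simpa)
  · simp at hadj
  · simp at hadj
  · exact exists_edge_disjoint_shortest_paths
      (dist_completeBipartiteGraph_inr_inr (by simpa using huv)) (w := .inl a) (w' := .inl a')
      (by simp [mem_commonNeighbors]) (by simp [mem_commonNeighbors]) (by simpa)

lemma cliqueNum_auxGraph_completeBipartiteGraph [Nontrivial α] [Nontrivial β] :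
    (auxGraph (completeBipartiteGraph α β)).cliqueNum = 1 := by
  obtain ⟨a⟩ := ‹Nontrivial α›.to_nonempty
  obtain ⟨b⟩ := ‹Nontrivial β›.to_nonempty
  have : Nonempty (completeBipartiteGraph α β).edgeSet := ⟨⟨s(.inl a, .inr b), by simp⟩⟩
  rw [auxGraph_completeBipartiteGraph, cliqueNum_bot]

end SimpleGraph

section Rainbow

variable {α β : Type*} {G : SimpleGraph V} {u v : V}

lemma isRainbow_toWalk (f : Sym2 V → C) (h : G.Adj u v) : IsRainbow f h.toWalk := by
  simp [IsRainbow]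

lemma isRainbow_cons_cons_iff {f : Sym2 V → C} {w : V} (h₁ : G.Adj u w) (h₂ : G.Adj w v) :
    IsRainbow f (.cons h₁ (.cons h₂ .nil)) ↔ f s(u, w) ≠ f s(w, v) := by
  simp [IsRainbow]

def colorProfile (f : Sym2 (α ⊕ β) → C) (b : β) : α → C :=
  fun a ↦ f s(.inl a, .inr b)

theorem stronglyRainbowConnects_completeBipartiteGraph_iff [Nonempty α] [Nonempty β]
    (f : Sym2 (α ⊕ β) → C) :
    StronglyRainbowConnects (completeBipartiteGraph α β) f ↔
      Function.Injective (colorProfile f) ∧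
        ∀ a a', a ≠ a' → ∃ b, colorProfile f b a ≠ colorProfile f b a' := by
  constructor
  · intro hf
    refine ⟨fun b b' hbb' ↦ by_contra fun hne ↦ ?_, fun a a' ha ↦ ?_⟩
    · obtain ⟨p, hp, hr⟩ := hf (.inr b) (.inr b') (by simpa)
      obtain ⟨a | _, h, _, rfl⟩ := hp.exists_eq_cons_cons (dist_completeBipartiteGraph_inr_inr hne)
      · rw [isRainbow_cons_cons_iff, Sym2.eq_swap] at hr
        exact hr (congrFun hbb' a)
      · simp at h
    · obtain ⟨p, hp, hr⟩ := hf (.inl a) (.inl a') (by simpa)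
      obtain ⟨_ | b, h, _, rfl⟩ := hp.exists_eq_cons_cons (dist_completeBipartiteGraph_inl_inl ha)
      · simp at h
      · rw [isRainbow_cons_cons_iff, Sym2.eq_swap (a := Sum.inr b)] at hr
        exact ⟨b, hr⟩
  · rintro ⟨hinj, hsep⟩ (a | b) (a' | b') huv
    · obtain ⟨b, hb⟩ := hsep a a' (by simpa using huv)
      refine ⟨.cons (v := .inr b) (by simp) (.cons (by simp) .nil),
        isShortestPath_cons_cons _ _ (dist_completeBipartiteGraph_inl_inl (by simpa using huv)),
        (isRainbow_cons_cons_iff _ _).mpr ?_⟩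
      rwa [Sym2.eq_swap (a := Sum.inr b)]
    · exact ⟨_, isShortestPath_toWalk (by simp), isRainbow_toWalk f (by simp)⟩
    · exact ⟨_, isShortestPath_toWalk (by simp), isRainbow_toWalk f (by simp)⟩
    · have hbb' : b ≠ b' := by simpa using huv
      obtain ⟨a, ha⟩ : ∃ a, colorProfile f b a ≠ colorProfile f b' a := by
        by_contra! h
        exact hbb' (hinj (funext h))
      refine ⟨.cons (v := .inl a) (by simp) (.cons (by simp) .nil),
        isShortestPath_cons_cons _ _ (dist_completeBipartiteGraph_inr_inr hbb'),
        (isRainbow_cons_cons_iff _ _).mpr ?_⟩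
      rwa [Sym2.eq_swap (a := Sum.inr b)]

lemma card_le_pow_of_stronglyRainbowConnects [Finite α] [Nonempty α] [Nonempty β]
    {c : ℕ} {f : Sym2 (α ⊕ β) → Fin c}
    (hf : StronglyRainbowConnects (completeBipartiteGraph α β) f) :
    Nat.card β ≤ c ^ Nat.card α := by
  simpa [Nat.card_fun] using Nat.card_le_card_of_injective _
    ((stronglyRainbowConnects_completeBipartiteGraph_iff f).mp hf).1

/-- `c₀` only colours pairs inside one side, which are not edges. -/
def bipartiteColoring (g : β → α → C) (c₀ : C) : Sym2 (α ⊕ β) → C :=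
  Sym2.lift ⟨fun x y ↦ match x, y with
    | .inl a, .inr b => g b a
    | .inr b, .inl a => g b a
    | _, _ => c₀, by rintro (_ | _) (_ | _) <;> rfl⟩

lemma colorProfile_bipartiteColoring (g : β → α → C) (c₀ : C) :
    colorProfile (bipartiteColoring g c₀) = g :=
  rfl

lemma stronglyRainbowConnects_bipartiteColoring [Nonempty α] (e : β ≃ (α → C)) (φ : α ↪ C)
    (c₀ : C) : StronglyRainbowConnects (completeBipartiteGraph α β) (bipartiteColoring e c₀) := by
  have : Nonempty β := ⟨e.symm φ⟩
  refine (stronglyRainbowConnects_completeBipartiteGraph_iff _).mpr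
    ⟨e.injective, fun a a' ha ↦ ⟨e.symm φ, ?_⟩⟩
  simpa [colorProfile_bipartiteColoring] using φ.injective.ne ha

theorem src_completeBipartiteGraph_fin_pow {s c : ℕ} (hs : s ≠ 0) (hsc : s ≤ c) :
    src (completeBipartiteGraph (Fin s) (Fin (c ^ s))) = c := by
  have : Nonempty (Fin s) := Fin.pos_iff_nonempty.mp (Nat.pos_of_ne_zero hs)
  have : Nonempty (Fin (c ^ s)) := Fin.pos_iff_nonempty.mp (Nat.pow_pos (by omega))
  have hc : c ∈ {c | ∃ f : Sym2 (Fin s ⊕ Fin (c ^ s)) → Fin c,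
      StronglyRainbowConnects (completeBipartiteGraph (Fin s) (Fin (c ^ s))) f} :=
    ⟨_, stronglyRainbowConnects_bipartiteColoring finFunctionFinEquiv.symm (Fin.castLEEmb hsc)
      ⟨0, by omega⟩⟩
  refine le_antisymm (Nat.sInf_le hc) (le_csInf ⟨c, hc⟩ fun c' ⟨f, hf⟩ ↦ ?_)
  have := card_le_pow_of_stronglyRainbowConnects hf
  rw [Nat.card_fin, Nat.card_fin] at this
  exact (Nat.pow_le_pow_iff_left hs).mp this

end Rainbow

/-- For every `k`, the graph `G = K_{2,(k+2)²}` satisfies `diam(G) = 2`,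
`ω(H(G)) = 1`, `src(G) = k+2`, hence `src(G) − max(diam(G), ω(H(G))) ≥ k`. -/
theorem stmt11 (k : ℕ) :
    (completeBipartiteGraph (Fin 2) (Fin ((k + 2) ^ 2))).diam = 2 ∧
    (auxGraph (completeBipartiteGraph (Fin 2) (Fin ((k + 2) ^ 2)))).cliqueNum = 1 ∧
    src (completeBipartiteGraph (Fin 2) (Fin ((k + 2) ^ 2))) = k + 2 ∧
    k ≤ src (completeBipartiteGraph (Fin 2) (Fin ((k + 2) ^ 2))) -
      max (completeBipartiteGraph (Fin 2) (Fin ((k + 2) ^ 2))).diam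
        (auxGraph (completeBipartiteGraph (Fin 2) (Fin ((k + 2) ^ 2)))).cliqueNum := by
  have : Nontrivial (Fin ((k + 2) ^ 2)) := Fin.nontrivial_iff_two_le.mpr
    ((Nat.le_add_left 2 k).trans (Nat.le_self_pow two_ne_zero _))
  have hdiam := SimpleGraph.diam_completeBipartiteGraph (α := Fin 2) (β := Fin ((k + 2) ^ 2))
  have hclique :=
    SimpleGraph.cliqueNum_auxGraph_completeBipartiteGraph (α := Fin 2) (β := Fin ((k + 2) ^ 2))
  have hsrc := src_completeBipartiteGraph_fin_pow two_ne_zero (Nat.le_add_left 2 k)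
  refine ⟨hdiam, hclique, hsrc, ?_⟩
  rw [hdiam, hclique, hsrc]
  omega
end

section
/- Let G be a simple connected graph whose auxiliary graph H(G) contains a clique of size c, i.e., c edges of G that pairwise separate common vertex pairs. Then for any set K of colors with |K| < c, there is no edge coloring f: E(G) → K that strongly rainbow connects G. -/
open SimpleGraph

variable {V : Type*} {C : Type*}

theorem StronglyRainbowConnects.injOn_of_isClique {G : SimpleGraph V} {f : Sym2 V → C}
    (hf : StronglyRainbowConnects G f) {U : Set G.edgeSet} (hU : (auxGraph G).IsClique U) :
    U.InjOn (fun e => f e.1) := by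
  intro e₁ he₁ e₂ he₂ hf₁₂
  by_contra hne
  obtain ⟨-, u, v, huv, h₁, h₂⟩ := hU he₁ he₂ hne
  exact hf.apply_ne_of_edgeSeparates (Subtype.coe_injective.ne hne) huv h₁ h₂ hf₁₂

theorem StronglyRainbowConnects.card_le_of_isClique [Fintype C] {G : SimpleGraph V}
    {f : Sym2 V → C} (hf : StronglyRainbowConnects G f) {U : Finset G.edgeSet}
    (hU : (auxGraph G).IsClique (U : Set G.edgeSet)) : U.card ≤ Fintype.card C :=
  Finset.card_le_card_of_injOn _ (fun _ _ => Finset.mem_coe.2 (Finset.mem_univ _))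
    (hf.injOn_of_isClique hU)

theorem stmt18_general {V : Type*} (G : SimpleGraph V)
    (c : ℕ) (U : Finset G.edgeSet) (hcard : U.card = c)
    (hclique : (auxGraph G).IsClique (U : Set G.edgeSet))
    (K : Type*) [Fintype K] (hK : Fintype.card K < c) :
    ∀ f : Sym2 V → K, ¬ StronglyRainbowConnects G f := fun _ hf =>
  (hf.card_le_of_isClique hclique).not_gt (hcard ▸ hK)

/-- If the auxiliary graph `H(G)` contains a clique of size `c`, then no edge
coloring with fewer than `c` colors strongly rainbow connects `G`. -/
theorem stmt18 {V : Type*} (G : SimpleGraph V) (hG : G.Connected)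
    (c : ℕ) (U : Finset G.edgeSet) (hcard : U.card = c)
    (hclique : (auxGraph G).IsClique (U : Set G.edgeSet))
    (K : Type*) [Fintype K] (hK : Fintype.card K < c) :
    ∀ f : Sym2 V → K, ¬ StronglyRainbowConnects G f :=
  stmt18_general G c U hcard hclique K hK
end
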